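/- Assume h_p ≥ 0 and r_i ≥ r_{i+1} for i = 1,…,N−1. Let d : [0,∞) → ℝ^N be continuous and let (p, Δ) : [0,∞) → ℝ^N × ℝ^N be differentiable and satisfy ṗ(t) = −(B + h_p⟨B⟩)RBᵀ(M⁻¹p(t) − v₀𝟙) + B A Δ(t) + d(t), Δ̇(t) = −Bᵀ(M⁻¹p(t) − v₀𝟙) for all t ≥ 0. Then the system is passive with output y(t) = M⁻¹p(t) − v₀𝟙: for every t ≥ 0, the derivative of t ↦ H(p(t),Δ(t)) satisfies d/dt H(p(t), Δ(t)) ≤ y(t)ᵀd(t). -/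

import Mathlib

open Matrix MeasureTheory Real

/-- The N×N matrix with 1 on the diagonal and -1 on the first superdiagonal. -/
noncomputable def Bmat (N : ℕ) : Matrix (Fin N) (Fin N) ℝ :=
  Matrix.of fun i j => if j = i then 1 else if (j : ℕ) = (i : ℕ) + 1 then -1 else 0

/-- Entrywise absolute value of `Bmat N`. -/
noncomputable def absB (N : ℕ) : Matrix (Fin N) (Fin N) ℝ :=
  Matrix.of fun i j => |Bmat N i j|

/-- Euclidean norm of a vector in ℝ^N. -/
noncomputable def norm2 {N : ℕ} (x : Fin N → ℝ) : ℝ := Real.sqrt (x ⬝ᵥ x)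

/-- The Hamiltonian H(p, Δ) = ½(p − v₀M𝟙)ᵀ M⁻¹ (p − v₀M𝟙) + ½ Δᵀ A Δ. -/
noncomputable def Ham {N : ℕ} (v0 : ℝ) (m a : Fin N → ℝ) (p Δ : Fin N → ℝ) : ℝ :=
  (1/2) * ((p - v0 • (Matrix.diagonal m *ᵥ fun _ => 1)) ⬝ᵥ
      (Matrix.diagonal (fun i => (m i)⁻¹) *ᵥ (p - v0 • (Matrix.diagonal m *ᵥ fun _ => 1)))) +
  (1/2) * (Δ ⬝ᵥ (Matrix.diagonal a *ᵥ Δ))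

/-!
Along a trajectory, `dH/dt = yᵀṗ + (AΔ)ᵀΔ̇` with `y = M⁻¹p − v₀𝟙`. The coupling terms `yᵀBAΔ` and
`−(AΔ)ᵀBᵀy` cancel, leaving `yᵀd − yᵀ(B + h_p⟨B⟩)RBᵀy`. Writing `B = 1 − S` and `⟨B⟩ = 1 + S` with
`S` the superdiagonal of ones, `(⟨B⟩ᵀy)_j (Bᵀy)_j = y_j² − y_{j-1}² = (Bᵀ(y ∘ y))_j` (with
`y_{-1} = 0`), so the dissipation equals `(Bᵀy)ᵀR(Bᵀy) + h_p (Br)ᵀ(y ∘ y)`. Both terms are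
nonnegative: `R ≥ 0`, and `Br ≥ 0` entrywise because `r` is nonnegative and nonincreasing.
-/

open Finset

noncomputable def superdiag (N : ℕ) : Matrix (Fin N) (Fin N) ℝ :=
  Matrix.of fun i j => if (j : ℕ) = (i : ℕ) + 1 then 1 else 0

section Bidiagonal

variable {N : ℕ}

lemma Bmat_eq_one_sub_superdiag : Bmat N = 1 - superdiag N := by
  ext i j
  simp only [Bmat, superdiag, Matrix.sub_apply, one_apply, of_apply]
  split_ifs <;> simp_all

lemma absB_eq_one_add_superdiag : absB N = 1 + superdiag N := by
  ext i j
  simp only [absB, Bmat, superdiag, Matrix.add_apply, one_apply, of_apply]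
  split_ifs <;> simp_all

lemma superdiag_mulVec_apply (r : Fin N → ℝ) (i : Fin N) :
    (superdiag N *ᵥ r) i = if h : (i : ℕ) + 1 < N then r ⟨i + 1, h⟩ else 0 := by
  simp only [mulVec, dotProduct, superdiag, of_apply, ite_mul, one_mul, zero_mul]
  split_ifs with h
  · have hi : ∀ j : Fin N, (j : ℕ) = i + 1 ↔ j = ⟨i + 1, h⟩ := fun j => by rw [Fin.ext_iff]
    simp [hi]
  · exact sum_eq_zero fun j _ => if_neg (by omega)

lemma superdiag_transpose_mulVec_apply (y : Fin N → ℝ) (j : Fin N) :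
    ((superdiag N)ᵀ *ᵥ y) j = if h : (j : ℕ) = 0 then 0 else y ⟨j - 1, by omega⟩ := by
  simp only [mulVec, dotProduct, superdiag, transpose_apply, of_apply, ite_mul, one_mul, zero_mul]
  split_ifs with h
  · exact sum_eq_zero fun i _ => if_neg (by omega)
  · have hj : ∀ i : Fin N, (j : ℕ) = i + 1 ↔ i = ⟨j - 1, by omega⟩ := fun i => by
      simp only [Fin.ext_iff]
      omega
    simp [hj]

lemma superdiag_transpose_mulVec_mul_self (y : Fin N → ℝ) :
    (superdiag N)ᵀ *ᵥ (y * y) = ((superdiag N)ᵀ *ᵥ y) * ((superdiag N)ᵀ *ᵥ y) := by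
  funext j
  simp only [Pi.mul_apply, superdiag_transpose_mulVec_apply]
  split_ifs <;> simp

lemma absB_transpose_mulVec_mul_Bmat_transpose_mulVec (y : Fin N → ℝ) :
    ((absB N)ᵀ *ᵥ y) * ((Bmat N)ᵀ *ᵥ y) = (Bmat N)ᵀ *ᵥ (y * y) := by
  simp only [Bmat_eq_one_sub_superdiag, absB_eq_one_add_superdiag, transpose_sub, transpose_add,
    transpose_one, sub_mulVec, add_mulVec, one_mulVec, superdiag_transpose_mulVec_mul_self]
  ring

lemma Bmat_mulVec_nonneg {r : Fin N → ℝ} (hr : 0 ≤ r)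
    (hrdec : ∀ i : Fin N, ∀ h : (i : ℕ) + 1 < N, r ⟨(i : ℕ) + 1, h⟩ ≤ r i) :
    0 ≤ Bmat N *ᵥ r := by
  intro i
  rw [Bmat_eq_one_sub_superdiag, sub_mulVec, one_mulVec, Pi.sub_apply, superdiag_mulVec_apply]
  split_ifs with h
  · exact sub_nonneg.2 (hrdec i h)
  · simpa using hr i

end Bidiagonal

lemma dotProduct_diagonal_mulVec {ι R : Type*} [Fintype ι] [DecidableEq ι] [CommSemiring R]
    (x r z : ι → R) : x ⬝ᵥ (diagonal r *ᵥ z) = r ⬝ᵥ (x * z) := by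
  simp only [dotProduct, mulVec_diagonal, Pi.mul_apply]
  exact sum_congr rfl fun i _ => by ring

lemma dissipation_nonneg {N : ℕ} {hp : ℝ} (hhp : 0 ≤ hp) {r : Fin N → ℝ} (hr : 0 ≤ r)
    (hrdec : ∀ i : Fin N, ∀ h : (i : ℕ) + 1 < N, r ⟨(i : ℕ) + 1, h⟩ ≤ r i) (y : Fin N → ℝ) :
    0 ≤ y ⬝ᵥ (((Bmat N + hp • absB N) * diagonal r * (Bmat N)ᵀ) *ᵥ y) := by
  have hsplit : y ⬝ᵥ (((Bmat N + hp • absB N) * diagonal r * (Bmat N)ᵀ) *ᵥ y) =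
      r ⬝ᵥ (((Bmat N)ᵀ *ᵥ y) * ((Bmat N)ᵀ *ᵥ y)) + hp * ((Bmat N *ᵥ r) ⬝ᵥ (y * y)) := by
    rw [← mulVec_mulVec, ← mulVec_mulVec, dotProduct_mulVec, ← mulVec_transpose, transpose_add,
      transpose_smul, add_mulVec, smul_mulVec, dotProduct_diagonal_mulVec, add_mul, smul_mul_assoc,
      absB_transpose_mulVec_mul_Bmat_transpose_mulVec, dotProduct_add, dotProduct_smul,
      dotProduct_mulVec, vecMul_transpose, smul_eq_mul]
  rw [hsplit]
  exact add_nonneg (dotProduct_nonneg_of_nonneg hr fun j => mul_self_nonneg _)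
    (mul_nonneg hhp (dotProduct_nonneg_of_nonneg (Bmat_mulVec_nonneg hr hrdec)
      fun i => mul_self_nonneg _))

lemma HasDerivAt.dotProduct_diagonal_mulVec_self {ι : Type*} [Fintype ι] [DecidableEq ι]
    (w : ι → ℝ) {x : ℝ → ι → ℝ} {x' : ι → ℝ} {t : ℝ} (hx : HasDerivAt x x' t) :
    HasDerivAt (fun s => x s ⬝ᵥ (diagonal w *ᵥ x s)) (2 * ((diagonal w *ᵥ x t) ⬝ᵥ x')) t := by
  have hxi := hasDerivAt_pi.1 hx
  simp only [dotProduct, mulVec_diagonal, mul_sum]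
  exact HasDerivAt.fun_sum fun i _ =>
    ((hxi i).mul ((hxi i).const_mul (w i))).congr_deriv (by ring)

lemma hasDerivAt_Ham {N : ℕ} {v0 : ℝ} {m a : Fin N → ℝ} (hm : ∀ i, m i ≠ 0)
    {p Δ : ℝ → Fin N → ℝ} {p' Δ' : Fin N → ℝ} {t : ℝ}
    (hp : HasDerivAt p p' t) (hΔ : HasDerivAt Δ Δ' t) :
    HasDerivAt (fun s => Ham v0 m a (p s) (Δ s))
      ((diagonal (fun i => (m i)⁻¹) *ᵥ p t - v0 • (fun _ => 1)) ⬝ᵥ p' +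
        (diagonal a *ᵥ Δ t) ⬝ᵥ Δ') t := by
  have hkin := ((hp.sub_const (v0 • (diagonal m *ᵥ fun _ => 1))).dotProduct_diagonal_mulVec_self
    fun i => (m i)⁻¹).const_mul (1 / 2)
  have hpot := (hΔ.dotProduct_diagonal_mulVec_self a).const_mul (1 / 2)
  have hy : diagonal (fun i => (m i)⁻¹) *ᵥ (p t - v0 • (diagonal m *ᵥ fun _ => 1)) =
      diagonal (fun i => (m i)⁻¹) *ᵥ p t - v0 • (fun _ => 1) := by
    rw [mulVec_sub, mulVec_smul, mulVec_mulVec, diagonal_mul_diagonal]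
    simp [hm]
  refine (hkin.add hpot).congr_deriv ?_
  rw [hy]
  ring

lemma power_balance {ι : Type*} [Fintype ι] [DecidableEq ι] (K B : Matrix ι ι ℝ)
    (a y Δ d : ι → ℝ) :
    y ⬝ᵥ (-(K *ᵥ y) + (B * diagonal a) *ᵥ Δ + d) + (diagonal a *ᵥ Δ) ⬝ᵥ (-(Bᵀ *ᵥ y)) =
      y ⬝ᵥ d - y ⬝ᵥ (K *ᵥ y) := by
  rw [← mulVec_mulVec, dotProduct_add, dotProduct_add, dotProduct_mulVec, mulVec_transpose,
    dotProduct_neg, dotProduct_neg, dotProduct_comm (diagonal a *ᵥ Δ)]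
  ring

theorem stmt_2_general (N : ℕ) (hp : ℝ) (hhp : 0 ≤ hp) (v0 : ℝ)
    (r a m : Fin N → ℝ) (hr : ∀ i, 0 < r i) (hm : ∀ i, 0 < m i)
    (hrdec : ∀ i : Fin N, ∀ h : (i : ℕ) + 1 < N, r ⟨(i : ℕ) + 1, h⟩ ≤ r i)
    (d : ℝ → Fin N → ℝ)
    (p Δ : ℝ → Fin N → ℝ)
    (hdyn : ∀ t : ℝ, 0 ≤ t →
      HasDerivAt p
        (-(((Bmat N + hp • absB N) * Matrix.diagonal r * (Bmat N)ᵀ) *ᵥ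
            (Matrix.diagonal (fun i => (m i)⁻¹) *ᵥ p t - v0 • (fun _ : Fin N => (1:ℝ))))
          + (Bmat N * Matrix.diagonal a) *ᵥ Δ t + d t) t ∧
      HasDerivAt Δ
        (-((Bmat N)ᵀ *ᵥ (Matrix.diagonal (fun i => (m i)⁻¹) *ᵥ p t - v0 • (fun _ : Fin N => (1:ℝ))))) t)
    (t : ℝ) (ht : 0 ≤ t) :
    deriv (fun s => Ham v0 m a (p s) (Δ s)) t ≤
      (Matrix.diagonal (fun i => (m i)⁻¹) *ᵥ p t - v0 • (fun _ : Fin N => (1:ℝ))) ⬝ᵥ d t := by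
  obtain ⟨hP, hΔ⟩ := hdyn t ht
  rw [(hasDerivAt_Ham (fun i => (hm i).ne') hP hΔ).deriv, power_balance]
  exact sub_le_self _ (dissipation_nonneg hhp (fun i => (hr i).le) hrdec _)

/-- passivity with output y = M⁻¹p − v₀𝟙:
the derivative of the Hamiltonian along trajectories is bounded by yᵀd. -/
theorem stmt_2 (N : ℕ) (hN : 1 ≤ N) (hp : ℝ) (hhp : 0 ≤ hp) (v0 : ℝ)
    (r a m : Fin N → ℝ) (hr : ∀ i, 0 < r i) (ha : ∀ i, 0 < a i) (hm : ∀ i, 0 < m i)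
    (hrdec : ∀ i : Fin N, ∀ h : (i : ℕ) + 1 < N, r ⟨(i : ℕ) + 1, h⟩ ≤ r i)
    (d : ℝ → Fin N → ℝ) (hdcont : Continuous d)
    (p Δ : ℝ → Fin N → ℝ)
    (hdyn : ∀ t : ℝ, 0 ≤ t →
      HasDerivAt p
        (-(((Bmat N + hp • absB N) * Matrix.diagonal r * (Bmat N)ᵀ) *ᵥ
            (Matrix.diagonal (fun i => (m i)⁻¹) *ᵥ p t - v0 • (fun _ : Fin N => (1:ℝ))))
          + (Bmat N * Matrix.diagonal a) *ᵥ Δ t + d t) t ∧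
      HasDerivAt Δ
        (-((Bmat N)ᵀ *ᵥ (Matrix.diagonal (fun i => (m i)⁻¹) *ᵥ p t - v0 • (fun _ : Fin N => (1:ℝ))))) t)
    (t : ℝ) (ht : 0 ≤ t) :
    deriv (fun s => Ham v0 m a (p s) (Δ s)) t ≤
      (Matrix.diagonal (fun i => (m i)⁻¹) *ᵥ p t - v0 • (fun _ : Fin N => (1:ℝ))) ⬝ᵥ d t :=
  stmt_2_general N hp hhp v0 r a m hr hm hrdec d p Δ hdyn t ht
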